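/- Let C be a Grothendieck category and L₀, L₁ stable localizing subcategories with L₀ ∩ L₁ = 0. Then every object of L₀ is L₁-closed: it is L₁-torsion-free and every short exact sequence 0 → X → Y → Z → 0 with X in L₀ and Z in L₁ splits. -/

import Mathlib

open CategoryTheory Limits

universe w v u u₂ u₃ u₄ u₅

namespace CentralSheaf

variable {C : Type u} [Category.{v} C] [Abelian C]

/-- A monomorphism is essential if every morphism whose precomposition with it
is a monomorphism is itself a monomorphism. -/
def IsEssentialMono {X Y : C} (f : X ⟶ Y) : Prop :=
  Mono f ∧ ∀ ⦃Z : C⦄ (g : Y ⟶ Z), Mono (f ≫ g) → Mono g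

/-- A Serre subcategory of an abelian category, given as a predicate on objects:
it contains the zero objects and is closed under isomorphisms, subobjects,
quotient objects and extensions. -/
structure IsSerre (P : C → Prop) : Prop where
  zero : ∀ X : C, IsZero X → P X
  iso : ∀ {X Y : C}, (X ≅ Y) → P X → P Y
  sub : ∀ {X Y : C} (f : X ⟶ Y), Mono f → P Y → P X
  quot : ∀ {X Y : C} (f : X ⟶ Y), Epi f → P X → P Y
  ext : ∀ S : ShortComplex C, S.ShortExact → P S.X₁ → P S.X₃ → P S.X₂

/-- A localizing subcategory: a Serre subcategory closed under arbitrary direct sums. -/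
structure IsLocalizing (P : C → Prop) extends IsSerre P : Prop where
  sums : ∀ {ι : Type v} (X : ι → C) (c : Cofan X), IsColimit c → (∀ i, P (X i)) → P c.pt

/-- Stability: closure under essential extensions. -/
def IsStable (P : C → Prop) : Prop :=
  ∀ {X Y : C} (f : X ⟶ Y), IsEssentialMono f → P X → P Y

/-- A stable localizing subcategory. -/
structure IsStableLocalizing (P : C → Prop) extends IsLocalizing P : Prop where
  stable : IsStable P

/-- Data exhibiting `D` as the Gabriel quotient `C/P` of `C` by the localizing
subcategory `P`: an exact quotient functor `T` with fully faithful right adjoint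
(section functor) `S`, whose kernel is exactly `P`. -/
structure QuotientData (P : C → Prop) (D : Type u₂) [Category.{v} D] [Abelian D] where
  T : C ⥤ D
  S : D ⥤ C
  adj : T ⊣ S
  additive : T.Additive
  preservesFiniteLimits : PreservesFiniteLimits T
  fullS : S.Full
  faithfulS : S.Faithful
  ker : ∀ X : C, P X ↔ IsZero (T.obj X)

/-- `t` is the `P`-torsion subobject of its ambient object: it lies in `P` and
contains every subobject lying in `P`. -/
def IsTorsionSubobject (P : C → Prop) {X : C} (t : Subobject X) : Prop :=
  P ((t : C)) ∧ ∀ s : Subobject X, P ((s : C)) → s ≤ t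

/-- `P₃` is the smallest localizing subcategory containing `P₁` and `P₂`. -/
def IsJoin (P₁ P₂ P₃ : C → Prop) : Prop :=
  IsLocalizing P₃ ∧ (∀ X, P₁ X → P₃ X) ∧ (∀ X, P₂ X → P₃ X) ∧
    ∀ Q : C → Prop, IsLocalizing Q → (∀ X, P₁ X → Q X) → (∀ X, P₂ X → Q X) →
      ∀ X, P₃ X → Q X

/-- An object is noetherian if its subobjects satisfy the ascending chain condition. -/
def IsNoetherianObject (X : C) : Prop := WellFoundedGT (Subobject X)

/-- A Grothendieck category is locally noetherian if it has a (separating) set of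
noetherian generators. -/
def IsLocallyNoetherian (C : Type u) [Category.{v} C] [Abelian C] : Prop :=
  ∃ 𝒢 : Set C, ObjectProperty.IsSeparating (fun G => G ∈ 𝒢) ∧ ∀ G ∈ 𝒢, IsNoetherianObject G

/-!
Let `t` be the `P₁`-torsion subobject of `Y`. Its intersection with `X` lies in `P₀ ∩ P₁ = 0`,
so `X` embeds into `Y / t`, with cokernel a quotient of `Z`, hence in `P₁`. Since `Y / t` is
`P₁`-torsion-free, this embedding is essential, so stability of `P₀` puts `Y / t` in `P₀`. The
cokernel then lies in `P₀ ∩ P₁ = 0`, so `X ≅ Y / t` and `Y → Y / t ≅ X` is a retraction.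
-/

def IsTorsionFree (P : C → Prop) (Y : C) : Prop :=
  ∀ ⦃W : C⦄ (w : W ⟶ Y), Mono w → P W → IsZero W

section

variable {P : C → Prop}

lemma IsLocalizing.exists_isTorsionSubobject [HasCoproducts.{v} C] [WellPowered.{v} C]
    (h : IsLocalizing P) (Y : C) : ∃ t : Subobject Y, IsTorsionSubobject P t := by
  let T := {s : Subobject Y // P ((s : C))}
  let e := equivShrink.{v} T
  let F : Shrink.{v} T → C := fun i => (((e.symm i).1 : Subobject Y) : C)
  let f : (∐ F) ⟶ Y := Sigma.desc fun i => ((e.symm i).1 : Subobject Y).arrow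
  refine ⟨Subobject.mk (Abelian.image.ι f), ?_, fun s hs => ?_⟩
  · have hsum : P (∐ F) :=
      h.sums F _ (coproductIsCoproduct F) fun i => (e.symm i).2
    exact h.iso (Subobject.underlyingIso _).symm
      (h.quot (Abelian.factorThruImage f) inferInstance hsum)
  · have hle : ((e.symm (e ⟨s, hs⟩)).1 : Subobject Y) ≤ Subobject.mk (Abelian.image.ι f) :=
      Subobject.le_mk_of_comm (Sigma.ι F (e ⟨s, hs⟩) ≫ Abelian.factorThruImage f)
        (by rw [Category.assoc, Abelian.image.fac]; simp [f, F])
    rwa [e.symm_apply_apply] at hle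

lemma mono_kernel_ι_pullback_fst_comp_snd {W Y Z : C} (w : W ⟶ Z) (p : Y ⟶ Z) :
    Mono (kernel.ι (pullback.fst w p) ≫ pullback.snd w p) := by
  refine Preadditive.mono_of_cancel_zero _ fun u hu => zero_of_comp_mono (kernel.ι _) ?_
  apply pullback.hom_ext
  · simp
  · simpa using hu

/-- The pullback is an extension of `W` by a subobject of `T`. -/
lemma IsSerre.pullback_cokernel_π (h : IsSerre P) {T Y W : C} (a : T ⟶ Y) [Mono a]
    (w : W ⟶ cokernel a) (hT : P T) (hW : P W) : P (pullback w (cokernel.π a)) := by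
  have hk : (kernel.ι (pullback.fst w (cokernel.π a)) ≫ pullback.snd w (cokernel.π a)) ≫
      cokernel.π a = 0 := by
    rw [Category.assoc, ← pullback.condition, kernel.condition_assoc, zero_comp]
  have := mono_kernel_ι_pullback_fst_comp_snd w (cokernel.π a)
  have hm : Mono (Abelian.monoLift a _ hk) := by
    have : Mono (Abelian.monoLift a _ hk ≫ a) := by rwa [Abelian.monoLift_comp]
    exact mono_of_mono _ a
  have hS : (ShortComplex.mk _ _ (kernel.condition (pullback.fst w (cokernel.π a)))).ShortExact :=
    { exact := ShortComplex.exact_of_f_is_kernel _ (kernelIsKernel _) }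
  exact h.ext _ hS (h.sub _ hm hT) hW

lemma IsTorsionSubobject.isTorsionFree_cokernel (h : IsSerre P) {Y : C} {t : Subobject Y}
    (ht : IsTorsionSubobject P t) : IsTorsionFree P (cokernel t.arrow) := by
  intro W w _ hW
  have hle : Subobject.mk (pullback.snd w (cokernel.π t.arrow)) ≤ t :=
    ht.2 _ (h.iso (Subobject.underlyingIso _).symm (h.pullback_cokernel_π _ w ht.1 hW))
  have hsnd : pullback.snd w (cokernel.π t.arrow) ≫ cokernel.π t.arrow = 0 := by
    rw [← Subobject.ofMkLE_arrow hle, Category.assoc, cokernel.condition, comp_zero]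
  refine IsZero.of_epi_eq_zero (pullback.fst w (cokernel.π t.arrow)) (zero_of_comp_mono w ?_)
  rw [pullback.condition, hsnd]

lemma mono_comp_cokernel_π_of_isZero_pullback {T X Y : C} (a : T ⟶ Y) [Mono a] (f : X ⟶ Y)
    (h : IsZero (pullback a f)) : Mono (f ≫ cokernel.π a) := by
  refine Preadditive.mono_of_cancel_zero _ fun u hu => ?_
  have hk : (u ≫ f) ≫ cokernel.π a = 0 := by rwa [Category.assoc]
  rw [← pullback.lift_snd _ _ (Abelian.monoLift_comp a _ hk),
    h.eq_zero_of_tgt (pullback.lift _ _ _), zero_comp]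

lemma mono_kernel_ι_comp_cokernel_π {X Y W : C} (f : X ⟶ Y) (g : Y ⟶ W) [Mono (f ≫ g)] :
    Mono (kernel.ι g ≫ cokernel.π f) := by
  have := mono_of_mono f g
  refine Preadditive.mono_of_cancel_zero _ fun u hu => zero_of_comp_mono (kernel.ι g) ?_
  have hk : (u ≫ kernel.ι g) ≫ cokernel.π f = 0 := by rwa [Category.assoc]
  have hlift : Abelian.monoLift f _ hk = 0 := zero_of_comp_mono (f ≫ g) (by
    rw [← Category.assoc, Abelian.monoLift_comp, Category.assoc, kernel.condition, comp_zero])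
  rw [← Abelian.monoLift_comp f _ hk, hlift, zero_comp]

lemma IsSerre.isEssentialMono_of_isTorsionFree (h : IsSerre P) {X Y : C} (f : X ⟶ Y) [Mono f]
    (hQ : P (cokernel f)) (hY : IsTorsionFree P Y) : IsEssentialMono f := by
  refine ⟨inferInstance, fun W g _ => Preadditive.mono_of_isZero_kernel g ?_⟩
  have := mono_kernel_ι_comp_cokernel_π f g
  exact hY (kernel.ι g) inferInstance (h.sub (kernel.ι g ≫ cokernel.π f) inferInstance hQ)

lemma IsSerre.cokernel_comp_of_shortExact (h : IsSerre P) {S : ShortComplex C}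
    (hS : S.ShortExact) (hZ : P S.X₃) {Y : C} (p : S.X₂ ⟶ Y) [Epi p] :
    P (cokernel (S.f ≫ p)) := by
  obtain ⟨d, hd⟩ := CokernelCofork.IsColimit.desc' hS.gIsCokernel
    (p ≫ cokernel.π (S.f ≫ p)) (by rw [← Category.assoc, cokernel.condition])
  have : Epi (S.g ≫ d) := by
    rw [show S.g ≫ d = p ≫ cokernel.π (S.f ≫ p) from hd]; infer_instance
  exact h.quot d (epi_of_epi S.g d) hZ

end

theorem objects_of_disjoint_stable_are_closed_general
    [HasColimits C] (hsep : ∃ G : C, IsSeparator G)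
    (P₀ P₁ : C → Prop) (h₀ : IsStableLocalizing P₀) (h₁ : IsStableLocalizing P₁)
    (hdisj : ∀ X : C, P₀ X → P₁ X → IsZero X)
    (X : C) (hX : P₀ X) :
    (∀ s : Subobject X, P₁ ((s : C)) → IsZero ((s : C))) ∧
    ∀ ⦃Y Z : C⦄ (f : X ⟶ Y) (g : Y ⟶ Z) (w : f ≫ g = 0),
      (ShortComplex.mk f g w).ShortExact → P₁ Z → ∃ r : Y ⟶ X, f ≫ r = 𝟙 X := by
  obtain ⟨G, hG⟩ := hsep
  have : WellPowered.{v} C := wellPowered_of_isSeparator G hG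
  refine ⟨fun s hs => hdisj _ (h₀.sub s.arrow inferInstance hX) hs, fun Y Z f g w hS hZ => ?_⟩
  have := hS.mono_f
  obtain ⟨t, ht⟩ := h₁.exists_isTorsionSubobject Y
  set f' := f ≫ cokernel.π t.arrow
  have : Mono f' := mono_comp_cokernel_π_of_isZero_pullback _ _ (hdisj _
    (h₀.sub (pullback.snd _ _) inferInstance hX) (h₁.sub (pullback.fst _ _) inferInstance ht.1))
  have hQ : P₁ (cokernel f') := h₁.cokernel_comp_of_shortExact hS hZ _
  have hess : IsEssentialMono f' :=
    h₁.isEssentialMono_of_isTorsionFree f' hQ (ht.isTorsionFree_cokernel h₁.toIsSerre)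
  have hQ₀ : P₀ (cokernel f') := h₀.quot (cokernel.π f') inferInstance (h₀.stable f' hess hX)
  have := Preadditive.epi_of_isZero_cokernel f' (hdisj _ hQ₀ hQ)
  have := isIso_of_mono_of_epi f'
  exact ⟨cokernel.π t.arrow ≫ inv f', by rw [← Category.assoc, IsIso.hom_inv_id]⟩

/-- If `L₀`, `L₁` are stable localizing subcategories of a
Grothendieck category with `L₀ ∩ L₁ = 0`, then every object `X` of `L₀` is
`L₁`-closed: `X` has no nonzero subobject in `L₁`, and every short exact
sequence `0 → X → Y → Z → 0` with `Z ∈ L₁` splits. -/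
theorem objects_of_disjoint_stable_are_closed
    [HasColimits C] [AB5 C] (hsep : ∃ G : C, IsSeparator G)
    (P₀ P₁ : C → Prop) (h₀ : IsStableLocalizing P₀) (h₁ : IsStableLocalizing P₁)
    (hdisj : ∀ X : C, P₀ X → P₁ X → IsZero X)
    (X : C) (hX : P₀ X) :
    (∀ s : Subobject X, P₁ ((s : C)) → IsZero ((s : C))) ∧
    ∀ ⦃Y Z : C⦄ (f : X ⟶ Y) (g : Y ⟶ Z) (w : f ≫ g = 0),
      (ShortComplex.mk f g w).ShortExact → P₁ Z → ∃ r : Y ⟶ X, f ≫ r = 𝟙 X :=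
  objects_of_disjoint_stable_are_closed_general hsep P₀ P₁ h₀ h₁ hdisj X hX

end CentralSheaf
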